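/- Let K ≥ 1 and let λ = (λ_1,…,λ_K), σ = (σ_1,…,σ_K) be real vectors. Define D_{λ,σ}(y) = ∑_{x=1}^K [λ_x (1-y) y^{x-1} − σ_x y (1-y)^{x-1}] for y ∈ ℝ. Then for all y, z ∈ [0,1], D_{λ,σ}(y) − D_{λ,σ}(z) = −(y−z) V_{λ,σ}(y,z), where V_{λ,σ}(y,z) = V_λ(y,z) + V_σ(1−y,1−z), V_φ(y,z) = ∑_{x=1}^K (φ_x − φ_{x+1}) v_x(y,z) with the convention φ_{K+1} = 0, and v_1(y,z) = 1, v_2(y,z) = y+z, and v_x(y,z) = y^{x-1} + z^{x-1} + ∑_{i=1}^{x-2} z^i y^{x-1-i} for 3 ≤ x ≤ K. -/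

import Mathlib

/-- The boundary operator `D_{λ,σ}` acting on a scalar `y`. -/
noncomputable def Dop (K : ℕ) (lam sig : ℕ → ℝ) (y : ℝ) : ℝ :=
  ∑ x ∈ Finset.Icc 1 K, (lam x * (1 - y) * y ^ (x - 1) - sig x * y * (1 - y) ^ (x - 1))

/-- The kernel `v_x(y,z)`. -/
noncomputable def vfun (x : ℕ) (y z : ℝ) : ℝ :=
  if x = 1 then 1
  else if x = 2 then y + z
  else y ^ (x - 1) + z ^ (x - 1) + ∑ i ∈ Finset.Icc 1 (x - 2), z ^ i * y ^ (x - 1 - i)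

/-- The operator `V_φ(y,z) = ∑_{x=1}^K (φ_x − φ_{x+1}) v_x(y,z)`. -/
noncomputable def Vphi (K : ℕ) (φ : ℕ → ℝ) (y z : ℝ) : ℝ :=
  ∑ x ∈ Finset.Icc 1 K, (φ x - φ (x + 1)) * vfun x y z

/-- Abel summation identity for the boundary sum. -/
lemma sumA (K : ℕ) (φ : ℕ → ℝ) (t : ℝ) :
    ∑ x ∈ Finset.Icc 1 K, φ x * (1 - t) * t ^ (x - 1) =
      (∑ x ∈ Finset.Icc 1 K, (φ x - φ (x + 1)) * (1 - t ^ x)) + φ (K + 1) * (1 - t ^ K) := by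
  induction K with
  | zero => simp
  | succ K ih =>
    rw [Finset.sum_Icc_succ_top (by omega), Finset.sum_Icc_succ_top (by omega), ih]
    simp only [Nat.add_sub_cancel, pow_succ]
    ring

lemma vfun_eq (x : ℕ) (hx : 1 ≤ x) (y z : ℝ) :
    vfun x y z = ∑ i ∈ Finset.range x, z ^ i * y ^ (x - 1 - i) := by
  match x, hx with
  | 1, _ => simp [vfun]
  | 2, _ => simp [vfun, Finset.sum_range_succ]
  | (m + 3), _ =>
    rw [vfun]
    simp only [show m + 3 ≠ 1 by omega, show m + 3 ≠ 2 by omega, if_false]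
    have e1 : m + 3 - 1 = m + 2 := rfl
    have e2 : m + 3 - 2 = m + 1 := rfl
    rw [e1, e2, Finset.sum_range_succ, Finset.sum_range_succ',
      ← Finset.Ico_add_one_right_eq_Icc, Finset.sum_Ico_eq_sum_range]
    have h1 : ∑ i ∈ Finset.range (m + 1 + 1 - 1), z ^ (1 + i) * y ^ (m + 2 - (1 + i)) =
        ∑ i ∈ Finset.range (m + 1), z ^ (i + 1) * y ^ (m + 2 - (i + 1)) := by
      apply Finset.sum_congr (by norm_num)
      intro i _
      congr 2 <;> omega
    rw [h1]
    have h2 : m + 2 - (m + 2) = 0 := by omega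
    rw [h2]
    simp only [Nat.sub_zero, pow_add]
    ring

lemma pow_sub_pow' (x : ℕ) (hx : 1 ≤ x) (y z : ℝ) :
    z ^ x - y ^ x = -(y - z) * vfun x y z := by
  rw [vfun_eq x hx, ← geom_sum₂_mul z y x]
  ring

theorem D_difference_decomposition (K : ℕ) (hK : 1 ≤ K) (lam sig : ℕ → ℝ)
    (hlam : lam (K + 1) = 0) (hsig : sig (K + 1) = 0)
    (y z : ℝ) (hy : y ∈ Set.Icc (0:ℝ) 1) (hz : z ∈ Set.Icc (0:ℝ) 1) :
    Dop K lam sig y - Dop K lam sig z =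
      -(y - z) * (Vphi K lam y z + Vphi K sig (1 - y) (1 - z)) := by
  have hsig' : ∀ t : ℝ, ∑ x ∈ Finset.Icc 1 K, sig x * t * (1 - t) ^ (x - 1) =
      (∑ x ∈ Finset.Icc 1 K, (sig x - sig (x + 1)) * (1 - (1 - t) ^ x)) +
        sig (K + 1) * (1 - (1 - t) ^ K) := by
    intro t
    have := sumA K sig (1 - t)
    simpa using this
  unfold Dop Vphi
  rw [Finset.sum_sub_distrib, Finset.sum_sub_distrib, sumA K lam y, sumA K lam z,
    hsig' y, hsig' z, hlam, hsig, mul_add, Finset.mul_sum, Finset.mul_sum]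
  simp only [zero_mul, add_zero]
  rw [← Finset.sum_sub_distrib, ← Finset.sum_sub_distrib, ← Finset.sum_sub_distrib,
    ← Finset.sum_add_distrib]
  apply Finset.sum_congr rfl
  intro x hx
  have hx1 : 1 ≤ x := (Finset.mem_Icc.mp hx).1
  have hyz := pow_sub_pow' x hx1 y z
  have hyz' := pow_sub_pow' x hx1 (1 - y) (1 - z)
  linear_combination (lam x - lam (x + 1)) * hyz - (sig x - sig (x + 1)) * hyz'
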